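/- Let B be the smallest closed star-subalgebra of A containing all the projections p_x, x a vertex of Q_n. Then for every vertex x of Q_n the corner p_x B p_x is commutative: for all a, b ∈ B one has (p_x · a · p_x)·(p_x · b · p_x) = (p_x · b · p_x)·(p_x · a · p_x). -/

import Mathlib

def hcAdj {n : ℕ} (x y : Fin n → Bool) : Prop :=
  (Finset.univ.filter (fun k => x k ≠ y k)).card = 1

def hcEven {n : ℕ} (x : Fin n → Bool) : Prop :=
  (Finset.univ.filter (fun k => x k = true)).card % 2 = 0

instance {n : ℕ} (x : Fin n → Bool) : Decidable (hcEven x) :=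
  inferInstanceAs (Decidable (_ = 0))

def hcFlip {n : ℕ} (k : Fin n) (v : Fin n → Bool) : Fin n → Bool :=
  Function.update v k (!(v k))

namespace hc
variable {n : ℕ} {k l : Fin n} {v y j : Fin n → Bool}

lemma flip_self (k : Fin n) (v : Fin n → Bool) : hcFlip k v k = !(v k) := by
  simp [hcFlip]

lemma flip_ne_apply (h : i ≠ k) (v : Fin n → Bool) : hcFlip k v i = v i := by
  simp [hcFlip, Function.update_of_ne h]

lemma flip_flip (k : Fin n) (v : Fin n → Bool) : hcFlip k (hcFlip k v) = v := by
  funext i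
  by_cases h : i = k
  · subst h; simp [flip_self]
  · rw [flip_ne_apply h, flip_ne_apply h]

lemma flip_comm (k l : Fin n) (v : Fin n → Bool) :
    hcFlip k (hcFlip l v) = hcFlip l (hcFlip k v) := by
  by_cases hkl : k = l
  · subst hkl; rfl
  funext i
  by_cases h1 : i = k
  · subst h1
    rw [flip_self, flip_ne_apply hkl, flip_ne_apply (Ne.symm (Ne.symm hkl)), flip_self]
  · by_cases h2 : i = l
    · subst h2
      rw [flip_ne_apply h1, flip_self, flip_self, flip_ne_apply h1]
    · rw [flip_ne_apply h1, flip_ne_apply h2, flip_ne_apply h2, flip_ne_apply h1]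

lemma flip_ne (k : Fin n) (v : Fin n → Bool) : hcFlip k v ≠ v := by
  intro h
  have := congrFun h k
  rw [flip_self] at this
  exact (Bool.not_ne_self (v k)) this

lemma flip_inj (h : k ≠ l) (v : Fin n → Bool) : hcFlip k v ≠ hcFlip l v := by
  intro he
  have := congrFun he k
  rw [flip_self, flip_ne_apply (Ne.symm (Ne.symm h))] at this
  · exact (Bool.not_ne_self (v k)).elim this
  
lemma adj_iff : hcAdj v y ↔ ∃ k, y = hcFlip k v := by
  constructor
  · intro h
    obtain ⟨k, hk⟩ := Finset.card_eq_one.mp h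
    refine ⟨k, funext fun i => ?_⟩
    by_cases hik : i = k
    · subst hik
      have : i ∈ Finset.univ.filter (fun k => v k ≠ y k) := hk ▸ Finset.mem_singleton_self i
      have hne : v i ≠ y i := (Finset.mem_filter.mp this).2
      rw [flip_self]
      revert hne; cases v i <;> cases y i <;> simp
    · have : i ∉ Finset.univ.filter (fun k => v k ≠ y k) := by
        rw [hk]; simp [hik]
      have heq : v i = y i := by
        by_contra hne
        exact this (Finset.mem_filter.mpr ⟨Finset.mem_univ i, hne⟩)
      rw [flip_ne_apply hik, heq]
  · rintro ⟨k, rfl⟩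
    have : Finset.univ.filter (fun i => v i ≠ hcFlip k v i) = {k} := by
      ext i
      simp only [Finset.mem_filter, Finset.mem_univ, true_and, Finset.mem_singleton]
      constructor
      · intro hne
        by_contra hik
        exact hne (flip_ne_apply hik v).symm
      · rintro rfl
        rw [flip_self]
        exact (Bool.not_ne_self (v i)).elim ∘ Eq.symm ∘ (by exact fun h => h)
    rw [hcAdj, this, Finset.card_singleton]

lemma adj_symm (h : hcAdj v y) : hcAdj y v := by
  unfold hcAdj at *
  rw [show (Finset.univ.filter fun k => y k ≠ v k) = Finset.univ.filter fun k => v k ≠ y k by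
    ext i; simp [ne_comm]]
  exact h

lemma even_flip : hcEven (hcFlip k v) ↔ ¬ hcEven v := by
  classical
  set T := Finset.univ.filter (fun i => v i = true) with hT
  have hfil : Finset.univ.filter (fun i => hcFlip k v i = true) =
      if v k = true then T.erase k else insert k T := by
    ext i
    by_cases hik : i = k
    · subst hik
      by_cases hv : v i = true <;> simp [flip_self, hv, hT]
    · by_cases hv : v k = true <;>
        simp [flip_ne_apply hik, hv, hT, hik, Finset.mem_erase, Finset.mem_insert]
  unfold hcEven
  rw [hfil, ← hT]
  by_cases hv : v k = true
  · have hkT : k ∈ T := by simp [hT, hv]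
    rw [if_pos hv, Finset.card_erase_of_mem hkT]
    obtain ⟨m, hm⟩ : ∃ m, T.card = m + 1 :=
      ⟨T.card - 1, (Nat.succ_pred_eq_of_pos (Finset.card_pos.mpr ⟨k, hkT⟩)).symm⟩
    rw [hm]
    simp [Nat.succ_mod_two_eq_zero_iff, Nat.succ_mod_two_eq_one_iff]
  · have hkT : k ∉ T := by simp [hT, hv]
    rw [if_neg hv, Finset.card_insert_of_notMem hkT]
    simp [Nat.succ_mod_two_eq_zero_iff, Nat.succ_mod_two_eq_one_iff]

lemma common_nbr (hkl : k ≠ l) (h1 : hcAdj v j)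
    (h2 : hcAdj (hcFlip l (hcFlip k v)) j) :
    j = hcFlip k v ∨ j = hcFlip l v := by
  obtain ⟨a, rfl⟩ := adj_iff.mp h1
  by_cases hak : a = k
  · exact Or.inl (by rw [hak])
  by_cases hal : a = l
  · exact Or.inr (by rw [hal])
  exfalso
  set w := hcFlip l (hcFlip k v) with hw
  have hsub : ({a, k, l} : Finset (Fin n)) ⊆
      Finset.univ.filter (fun i => w i ≠ hcFlip a v i) := by
    intro i hi
    simp only [Finset.mem_insert, Finset.mem_singleton] at hi
    refine Finset.mem_filter.mpr ⟨Finset.mem_univ i, ?_⟩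
    rcases hi with rfl | rfl | rfl
    · rw [flip_self, hw, flip_ne_apply hal, flip_ne_apply hak]
      exact fun h => Bool.not_ne_self (v i) h.symm
    · have e1 : w i = !(v i) := by
        rw [hw, flip_ne_apply hkl, flip_self]
      have e2 : hcFlip a v i = v i := flip_ne_apply (fun h => hak h.symm) v
      rw [e1, e2]
      exact fun h => Bool.not_ne_self (v i) h
    · have e1 : w i = !(v i) := by
        rw [hw, flip_self, flip_ne_apply (fun h => hkl h.symm)]
      have e2 : hcFlip a v i = v i := flip_ne_apply (fun h => hal h.symm) v
      rw [e1, e2]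
      exact fun h => Bool.not_ne_self (v i) h
  have hcard : 3 ≤ (Finset.univ.filter (fun i => w i ≠ hcFlip a v i)).card := by
    refine le_trans (le_of_eq ?_) (Finset.card_le_card hsub)
    rw [Finset.card_insert_of_notMem (by simp [hak, hal]),
      Finset.card_insert_of_notMem (by simp [hkl]), Finset.card_singleton]
  rw [h2] at hcard
  omega

end hc
/-- The walk word: product of projections along a walk. -/
def hcWW {n : ℕ} {A : Type*} [Mul A] (p : (Fin n → Bool) → A) :
    (Fin n → Bool) → List (Fin n) → A
  | v, [] => p v
  | v, k :: s => p v * hcWW p (hcFlip k v) s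

/-- Endpoint of a walk. -/
def hcEP {n : ℕ} (v : Fin n → Bool) (s : List (Fin n)) : Fin n → Bool :=
  s.foldl (fun u k => hcFlip k u) v

lemma hcWW_nil {n : ℕ} {A : Type*} [Mul A] (p : (Fin n → Bool) → A) (v : Fin n → Bool) :
    hcWW p v [] = p v := rfl

lemma hcWW_cons {n : ℕ} {A : Type*} [Mul A] (p : (Fin n → Bool) → A) (v : Fin n → Bool)
    (k : Fin n) (s : List (Fin n)) : hcWW p v (k :: s) = p v * hcWW p (hcFlip k v) s := rfl

lemma hcEP_nil {n : ℕ} (v : Fin n → Bool) : hcEP v [] = v := rfl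

lemma hcEP_cons {n : ℕ} (v : Fin n → Bool) (k : Fin n) (s : List (Fin n)) :
    hcEP v (k :: s) = hcEP (hcFlip k v) s := rfl

lemma hcSplitFirst {n : ℕ} (l : List (Fin n)) (k : Fin n) (h : k ∈ l) :
    ∃ s₁ s₂, l = s₁ ++ k :: s₂ ∧ k ∉ s₁ := by
  induction l with
  | nil => cases h
  | cons a t ih =>
    by_cases hak : a = k
    · exact ⟨[], t, by rw [hak]; rfl, List.not_mem_nil⟩
    · have hkt : k ∈ t := by
        rcases List.mem_cons.mp h with h1 | h2
        · exact absurd h1.symm hak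
        · exact h2
      obtain ⟨s₁, s₂, heq, hns⟩ := ih hkt
      exact ⟨a :: s₁, s₂, by rw [heq, List.cons_append],
        fun hmem => by
          rcases List.mem_cons.mp hmem with h1 | h2
          · exact hak h1.symm
          · exact hns h2⟩
open hc in
/-- Let `A` be a unital C*-algebra and `p` a family of projections
indexed by the vertices of `Q_n` satisfying (GP1) and (GP2), and let `B` be the smallest
closed star-subalgebra of `A` containing all the `p x`.  Then for every vertex `x` the
corner `p x • B • p x` is commutative. -/
theorem hypercube_corner_commutative {n : ℕ} (hn : 1 ≤ n)
    {A : Type*} [CStarAlgebra A]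
    (p : (Fin n → Bool) → A)
    (hproj : ∀ x, IsSelfAdjoint (p x) ∧ p x * p x = p x)
    (hGP1e : ∑ x ∈ Finset.univ.filter (fun x => hcEven x), p x = 1)
    (hGP1o : ∑ x ∈ Finset.univ.filter (fun x => ¬ hcEven x), p x = 1)
    (hGP2 : ∀ i j, hcEven i → ¬ hcEven j → ¬ hcAdj i j → p i * p j = 0)
    (x : Fin n → Bool) (a b : A)
    (ha : a ∈ (StarAlgebra.adjoin ℂ (Set.range p)).topologicalClosure)
    (hb : b ∈ (StarAlgebra.adjoin ℂ (Set.range p)).topologicalClosure) :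
    (p x * a * p x) * (p x * b * p x) = (p x * b * p x) * (p x * a * p x) := by
  classical
  have hsa : ∀ y, star (p y) = p y := fun y => (hproj y).1.star_eq
  have hidem : ∀ y, p y * p y = p y := fun y => (hproj y).2
  -- sums over parity classes
  have hsum_same : ∀ v : Fin n → Bool,
      (∑ y ∈ Finset.univ.filter (fun y => hcEven y ↔ hcEven v), p y) = 1 := by
    intro v
    by_cases hv : hcEven v
    · rw [show (Finset.univ.filter (fun y => hcEven y ↔ hcEven v)) =
        Finset.univ.filter (fun y => hcEven y) by ext y; simp [hv]]
      exact hGP1e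
    · rw [show (Finset.univ.filter (fun y => hcEven y ↔ hcEven v)) =
        Finset.univ.filter (fun y => ¬ hcEven y) by ext y; simp [hv]]
      exact hGP1o
  have hsum_opp : ∀ v : Fin n → Bool,
      (∑ y ∈ Finset.univ.filter (fun y => ¬ (hcEven y ↔ hcEven v)), p y) = 1 := by
    intro v
    by_cases hv : hcEven v
    · rw [show (Finset.univ.filter (fun y => ¬ (hcEven y ↔ hcEven v))) =
        Finset.univ.filter (fun y => ¬ hcEven y) by ext y; simp [hv]]
      exact hGP1o
    · rw [show (Finset.univ.filter (fun y => ¬ (hcEven y ↔ hcEven v))) =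
        Finset.univ.filter (fun y => hcEven y) by ext y; simp [hv]]
      exact hGP1e
  -- orthogonality within a parity class
  have hortho : ∀ u w : Fin n → Bool, u ≠ w → (hcEven u ↔ hcEven w) → p u * p w = 0 := by
    intro u w hne hpar
    letI := CStarAlgebra.spectralOrder A
    haveI := CStarAlgebra.spectralOrderedRing A
    set S := Finset.univ.filter (fun y => hcEven y ↔ hcEven u) with hS
    have huS : u ∈ S := by simp [hS]
    have h1 : p u = ∑ y ∈ S, p u * p y * p u := by
      conv_lhs => rw [← hidem u]
      calc p u * p u = p u * 1 * p u := by rw [mul_one]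
        _ = p u * (∑ y ∈ S, p y) * p u := by rw [hsum_same u]
        _ = ∑ y ∈ S, p u * p y * p u := by rw [Finset.mul_sum, Finset.sum_mul]
    rw [← Finset.add_sum_erase _ _ huS, hidem, hidem] at h1
    have h2 : ∑ y ∈ S.erase u, p u * p y * p u = 0 := (left_eq_add.mp h1)
    have h3 : ∀ y ∈ S.erase u, p u * p y * p u = star (p y * p u) * (p y * p u) := by
      intro y _
      rw [star_mul, hsa, hsa, ← mul_assoc, mul_assoc (p u) (p y) (p y), hidem]
    rw [Finset.sum_congr rfl h3] at h2
    have h4 : ∀ y ∈ S.erase u, star (p y * p u) * (p y * p u) = 0 :=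
      (Finset.sum_eq_zero_iff_of_nonneg (fun y _ => star_mul_self_nonneg _)).mp h2
    have hwS : w ∈ S.erase u := by
      refine Finset.mem_erase.mpr ⟨fun h => hne h.symm, ?_⟩
      simp [hS, hpar.symm]
    have h5 : p w * p u = 0 := CStarRing.star_mul_self_eq_zero_iff _ |>.mp (h4 w hwS)
    calc p u * p w = star (p w * p u) := by rw [star_mul, hsa, hsa]
      _ = 0 := by rw [h5, star_zero]
  -- GP2 both ways
  have hGP2' : ∀ u w : Fin n → Bool, ¬ (hcEven u ↔ hcEven w) → ¬ hcAdj u w →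
      p u * p w = 0 := by
    intro u w hpar hadj
    by_cases hu : hcEven u
    · exact hGP2 u w hu (fun hw => hpar ⟨fun _ => hw, fun _ => hu⟩) hadj
    · have hw : hcEven w := by tauto
      have : p w * p u = 0 := hGP2 w u hw hu (fun h => hadj (adj_symm h))
      calc p u * p w = star (p w * p u) := by rw [star_mul, hsa, hsa]
        _ = 0 := by rw [this, star_zero]
  have hzero : ∀ u w : Fin n → Bool, u ≠ w → ¬ hcAdj u w → p u * p w = 0 := by
    intro u w hne hadj
    by_cases hpar : hcEven u ↔ hcEven w
    · exact hortho u w hne hpar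
    · exact hGP2' u w hpar hadj
  -- the triple (sign-flip) relation
  have htri : ∀ (v : Fin n → Bool) (k l : Fin n), k ≠ l →
      p v * p (hcFlip k v) * p (hcFlip l (hcFlip k v)) =
      - (p v * p (hcFlip l v) * p (hcFlip l (hcFlip k v))) := by
    intro v k l hkl
    set w := hcFlip l (hcFlip k v) with hw
    have hvw_ne : v ≠ w := by
      intro h
      have := congrFun h k
      rw [hw, flip_ne_apply hkl, flip_self] at this
      exact Bool.not_ne_self (v k) this.symm
    have hvw_par : hcEven v ↔ hcEven w := by
      rw [hw, even_flip, even_flip]; tauto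
    have h0 : p v * 1 * p w = 0 := by
      rw [mul_one]; exact hortho v w hvw_ne hvw_par
    rw [← hsum_opp v, Finset.mul_sum, Finset.sum_mul] at h0
    set Sopp := Finset.univ.filter (fun y => ¬ (hcEven y ↔ hcEven v)) with hSopp
    have hsub : ({hcFlip k v, hcFlip l v} : Finset (Fin n → Bool)) ⊆ Sopp := by
      intro y hy
      rcases Finset.mem_insert.mp hy with rfl | hy
      · simp only [hSopp, Finset.mem_filter, Finset.mem_univ, true_and, even_flip]; tauto
      · rw [Finset.mem_singleton] at hy; subst hy
        simp only [hSopp, Finset.mem_filter, Finset.mem_univ, true_and, even_flip]; tauto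
    have hvanish : ∀ y ∈ Sopp, y ∉ ({hcFlip k v, hcFlip l v} : Finset (Fin n → Bool)) →
        p v * p y * p w = 0 := by
      intro y hyS hyn
      have hy_par : ¬ (hcEven y ↔ hcEven v) := (Finset.mem_filter.mp hyS).2
      by_cases hadj : hcAdj v y
      · have hnadj2 : ¬ hcAdj w y := by
          intro h2
          rcases common_nbr hkl hadj (hw ▸ h2) with h | h
          · exact hyn (by simp [h])
          · exact hyn (by simp [h])
        have hyw : p y * p w = 0 := by
          refine hGP2' y w (fun h => hy_par (h.trans hvw_par.symm)) ?_
          intro h; exact hnadj2 (adj_symm h)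
        rw [mul_assoc, hyw, mul_zero]
      · have : p v * p y = 0 := hGP2' v y (fun h => hy_par (Iff.symm h)) hadj
        rw [this, zero_mul]
    have hpair : ∑ y ∈ ({hcFlip k v, hcFlip l v} : Finset (Fin n → Bool)), p v * p y * p w
        = ∑ y ∈ Sopp, p v * p y * p w := Finset.sum_subset hsub hvanish
    rw [h0, Finset.sum_pair (flip_inj hkl v)] at hpair
    exact eq_neg_of_add_eq_zero_left hpair
  -- walk-word basics
  have hww_self : ∀ (s : List (Fin n)) (v : Fin n → Bool),
      p v * hcWW p v s = hcWW p v s := by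
    intro s
    induction s with
    | nil => intro v; rw [hcWW_nil]; exact hidem v
    | cons k s ih => intro v; rw [hcWW_cons, ← mul_assoc, hidem]
  have hswap : ∀ (s₂ : List (Fin n)) (v : Fin n → Bool) (k l : Fin n), k ≠ l →
      hcWW p v (k :: l :: s₂) = - hcWW p v (l :: k :: s₂) := by
    intro s₂ v k l hkl
    have e1 : hcWW p v (k :: l :: s₂) =
        (p v * p (hcFlip k v) * p (hcFlip l (hcFlip k v))) *
          hcWW p (hcFlip l (hcFlip k v)) s₂ := by
      rw [hcWW_cons, hcWW_cons]
      conv_rhs => rw [mul_assoc, hww_self s₂ (hcFlip l (hcFlip k v)), mul_assoc]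
    have e2 : hcWW p v (l :: k :: s₂) =
        (p v * p (hcFlip l v) * p (hcFlip l (hcFlip k v))) *
          hcWW p (hcFlip l (hcFlip k v)) s₂ := by
      rw [hcWW_cons, hcWW_cons, flip_comm k l]
      conv_rhs => rw [mul_assoc, hww_self s₂ (hcFlip l (hcFlip k v)), mul_assoc]
    rw [e1, e2, htri v k l hkl, neg_mul]
  have hswap' : ∀ (s₁ : List (Fin n)) (v : Fin n → Bool) (k l : Fin n) (s₂ : List (Fin n)),
      k ≠ l → hcWW p v (s₁ ++ k :: l :: s₂) = - hcWW p v (s₁ ++ l :: k :: s₂) := by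
    intro s₁
    induction s₁ with
    | nil => intro v k l s₂ hkl; exact hswap s₂ v k l hkl
    | cons a t ih =>
      intro v k l s₂ hkl
      rw [List.cons_append, List.cons_append, hcWW_cons, hcWW_cons,
        ih (hcFlip a v) k l s₂ hkl, mul_neg]
  have hpull : ∀ (s₁ : List (Fin n)) (v : Fin n → Bool) (k : Fin n) (s₂ : List (Fin n)),
      k ∉ s₁ → hcWW p v (s₁ ++ k :: s₂) =
        ((-1 : ℂ) ^ s₁.length) • hcWW p v (k :: (s₁ ++ s₂)) := by
    intro s₁
    induction s₁ with
    | nil => intro v k s₂ _; simp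
    | cons a t ih =>
      intro v k s₂ hk
      have hak : k ≠ a := fun h => hk (by rw [h]; exact List.mem_cons_self)
      have hkt : k ∉ t := fun h => hk (List.mem_cons_of_mem a h)
      rw [List.cons_append, hcWW_cons, ih (hcFlip a v) k s₂ hkt, mul_smul_comm,
        ← hcWW_cons p v a (k :: (t ++ s₂)),
        show (a :: k :: (t ++ s₂)) = ([] ++ a :: k :: (t ++ s₂)) from rfl,
        hswap' [] v a k (t ++ s₂) (fun h => hak h.symm)]
      rw [List.nil_append, smul_neg, ← neg_smul]
      congr 1
      · rw [List.length_cons, pow_succ, mul_comm, neg_one_mul]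
  -- endpoint and counts
  have hep : ∀ (s : List (Fin n)) (v : Fin n → Bool) (i : Fin n),
      hcEP v s i = if Even (s.count i) then v i else !(v i) := by
    intro s
    induction s with
    | nil => intro v i; simp [hcEP_nil]
    | cons a s ih =>
      intro v i
      rw [hcEP_cons, ih]
      by_cases hia : i = a
      · subst hia
        have hc : (i :: s).count i = s.count i + 1 := by simp [List.count_cons]
        rw [hc]
        by_cases he : Even (s.count i)
        · rw [if_pos he, if_neg (by rw [Nat.even_add_one]; exact fun h => h he),
            flip_self]
        · rw [if_neg he, if_pos (by rw [Nat.even_add_one]; exact he), flip_self,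
            Bool.not_not]
      · have hc : (a :: s).count i = s.count i := by
          simp [List.count_cons, hia, Ne.symm hia]
        rw [hc, flip_ne_apply hia]
  have hloop_count : ∀ (s : List (Fin n)), hcEP x s = x → ∀ i, Even (s.count i) := by
    intro s hs i
    by_contra hodd
    have := congrFun hs i
    rw [hep, if_neg hodd] at this
    exact Bool.not_ne_self (x i) this
  have hloop_of_count : ∀ (s : List (Fin n)) (v : Fin n → Bool),
      (∀ i, Even (s.count i)) → hcEP v s = v := by
    intro s v h
    funext i
    rw [hep, if_pos (h i)]
  -- the commuting generators
  set c : Fin n → A := fun k => p x * p (hcFlip k x) * p x with hc_def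
  set M : Subalgebra ℂ A := Algebra.adjoin ℂ (Set.range c) with hM_def
  have hcmem : ∀ k, c k ∈ M := fun k => Algebra.subset_adjoin ⟨k, rfl⟩
  have hpx_mem : p x ∈ M := by
    have himg : (Finset.univ : Finset (Fin n)).image (fun k => hcFlip k x) ⊆
        Finset.univ.filter (fun y => ¬ (hcEven y ↔ hcEven x)) := by
      intro y hy
      obtain ⟨k, _, rfl⟩ := Finset.mem_image.mp hy
      simp only [Finset.mem_filter, Finset.mem_univ, true_and, even_flip]
      tauto
    have hvan : ∀ y ∈ Finset.univ.filter (fun y => ¬ (hcEven y ↔ hcEven x)),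
        y ∉ (Finset.univ : Finset (Fin n)).image (fun k => hcFlip k x) →
        p x * p y * p x = 0 := by
      intro y hyS hyn
      have hnadj : ¬ hcAdj x y := by
        intro hadj
        obtain ⟨k, rfl⟩ := adj_iff.mp hadj
        exact hyn (Finset.mem_image.mpr ⟨k, Finset.mem_univ k, rfl⟩)
      rw [hGP2' x y (fun h => (Finset.mem_filter.mp hyS).2 h.symm) hnadj, zero_mul]
    have h1 : p x = ∑ y ∈ Finset.univ.filter (fun y => ¬ (hcEven y ↔ hcEven x)),
        p x * p y * p x := by
      conv_lhs => rw [← hidem x]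
      calc p x * p x = p x * 1 * p x := by rw [mul_one]
        _ = _ := by rw [← hsum_opp x, Finset.mul_sum, Finset.sum_mul]
    rw [h1, ← Finset.sum_subset himg hvan, Finset.sum_image
      (fun k _ l _ h => by by_contra hne; exact flip_inj hne x h)]
    exact Subalgebra.sum_mem M (fun k _ => hcmem k)
  have hfactor : ∀ (t : List (Fin n)) (k : Fin n),
      hcWW p x (k :: k :: t) = c k * hcWW p x t := by
    intro t k
    rw [hcWW_cons, hcWW_cons, hc.flip_flip, hc_def]
    conv_rhs => rw [mul_assoc, mul_assoc, hww_self t x]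
  -- main induction: loop words lie in M
  have hmemM : ∀ (m : ℕ) (s : List (Fin n)), s.length ≤ m → hcEP x s = x →
      hcWW p x s ∈ M := by
    intro m
    induction m with
    | zero =>
      intro s hs _
      rw [List.length_eq_zero_iff.mp (Nat.le_zero.mp hs), hcWW_nil]
      exact hpx_mem
    | succ m ih =>
      intro s hs hloop
      match s with
      | [] => rw [hcWW_nil]; exact hpx_mem
      | k :: s' =>
        have hcount := hloop_count _ hloop
        have hks' : k ∈ s' := by
          have h1 := hcount k
          rw [List.count_cons_self, Nat.even_add_one] at h1
          have : s'.count k ≠ 0 := by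
            intro h0; exact h1 (by rw [h0]; exact Even.zero)
          exact List.count_pos_iff.mp (Nat.pos_of_ne_zero this)
        obtain ⟨s₁, s₂, rfl, hk1⟩ := hcSplitFirst s' k hks'
        rw [hcWW_cons, hpull s₁ (hcFlip k x) k s₂ hk1, mul_smul_comm,
          ← hcWW_cons p x k (k :: (s₁ ++ s₂)), hfactor]
        refine Subalgebra.smul_mem M (mul_mem (hcmem k) (ih (s₁ ++ s₂) ?_ ?_)) _
        · have := hs
          simp only [List.length_cons, List.length_append] at this ⊢
          omega
        · refine hloop_of_count _ _ (fun i => ?_)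
          have := hcount i
          rw [List.count_cons, List.count_append, List.count_cons] at this
          rw [List.count_append]
          rw [Nat.even_iff] at this ⊢
          by_cases hik : i = k <;> simp [hik] at this ⊢ <;> omega
  -- the generators commute
  have hclpx : ∀ l, c l * p x = c l := by
    intro l
    simp only [hc_def]
    rw [mul_assoc (p x * p (hcFlip l x)) (p x) (p x), hidem]
  have hwwcc : ∀ k l : Fin n, hcWW p x [k, k, l, l] = c k * c l := by
    intro k l
    rw [hfactor [l, l] k, hfactor [] l, hcWW_nil, hclpx]
  have hcomm_c : ∀ k l : Fin n, c k * c l = c l * c k := by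
    intro k l
    by_cases hkl : k = l
    · rw [hkl]
    have e1 := hswap' [k] x k l [l] hkl
    have e2 := hswap' [] x k l [k, l] hkl
    have e3 := hswap' [l, k] x k l [] hkl
    have e4 := hswap' [l] x k l [k] hkl
    simp only [List.cons_append, List.nil_append] at e1 e2 e3 e4
    rw [← hwwcc k l, ← hwwcc l k, e1, e2, e3, e4, neg_neg, neg_neg]
  -- M is commutative
  have hcommM₁ : ∀ b ∈ M, ∀ k, b * c k = c k * b := by
    intro b hb
    induction hb using Algebra.adjoin_induction with
    | mem y hy =>
      intro k
      obtain ⟨l, rfl⟩ := hy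
      exact hcomm_c l k
    | algebraMap r => intro k; exact Algebra.commutes r (c k)
    | add u v hu hv ihu ihv => intro k; rw [add_mul, mul_add, ihu, ihv]
    | mul u v hu hv ihu ihv => intro k; rw [mul_assoc, ihv, ← mul_assoc, ihu, mul_assoc]
  have hM_comm : ∀ u ∈ M, ∀ v ∈ M, u * v = v * u := by
    intro u hu
    induction hu using Algebra.adjoin_induction with
    | mem y hy =>
      intro v hv
      obtain ⟨l, rfl⟩ := hy
      exact (hcommM₁ v hv l).symm
    | algebraMap r => intro v _; exact (Algebra.commutes r v)
    | add u w hu hw ihu ihw => intro v hv; rw [add_mul, mul_add, ihu v hv, ihw v hv]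
    | mul u w hu hw ihu ihw =>
      intro v hv
      rw [mul_assoc, ihw v hv, ← mul_assoc, ihu v hv, mul_assoc]
  -- words
  have hred : ∀ (L : List (Fin n → Bool)) (v : Fin n → Bool),
      p v * (L.map p).prod = 0 ∨
      ∃ s, p v * (L.map p).prod = hcWW p v s ∧ hcEP v s = L.getLastD v := by
    intro L
    induction L with
    | nil =>
      intro v
      right
      exact ⟨[], by rw [List.map_nil, List.prod_nil, mul_one, hcWW_nil], rfl⟩
    | cons y L ih =>
      intro v
      rw [List.map_cons, List.prod_cons, ← mul_assoc]
      by_cases hyv : y = v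
      · subst hyv
        rw [hidem y]
        rcases ih y with h0 | ⟨s, hs, hep'⟩
        · exact Or.inl h0
        · exact Or.inr ⟨s, hs, by rw [hep', List.getLastD_cons]⟩
      · by_cases hadj : hcAdj v y
        · obtain ⟨k, rfl⟩ := adj_iff.mp hadj
          rcases ih (hcFlip k v) with h0 | ⟨s, hs, hep'⟩
          · left
            rw [mul_assoc, h0, mul_zero]
          · right
            refine ⟨k :: s, ?_, ?_⟩
            · rw [mul_assoc, hs, hcWW_cons]
            · rw [hcEP_cons, hep', List.getLastD_cons]
        · left
          rw [hzero v y (fun h => hyv h.symm) hadj, zero_mul]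
  have hword : ∀ L : List (Fin n → Bool), p x * (L.map p).prod * p x ∈ M := by
    intro L
    have he : p x * (L.map p).prod * p x = p x * ((L ++ [x]).map p).prod := by
      rw [List.map_append, List.prod_append, List.map_cons, List.map_nil,
        List.prod_cons, List.prod_nil, mul_one, mul_assoc]
    rw [he]
    rcases hred (L ++ [x]) x with h0 | ⟨s, hs, hep'⟩
    · rw [h0]; exact zero_mem M
    · rw [hs]
      exact hmemM s.length s le_rfl (by rw [hep', List.getLastD_concat])
  -- the star-subalgebra is spanned by words
  have hstar_word : ∀ L : List (Fin n → Bool),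
      star ((L.map p).prod) = ((L.reverse.map p)).prod := by
    intro L
    induction L with
    | nil => simp
    | cons y L ih =>
      rw [List.map_cons, List.prod_cons, star_mul, ih, hsa, List.reverse_cons,
        List.map_append, List.prod_append, List.map_cons, List.map_nil,
        List.prod_cons, List.prod_nil, mul_one]
  set W : Set A := Set.range (fun L : List (Fin n → Bool) => (L.map p).prod) with hW_def
  have hspan_mul : ∀ u ∈ Submodule.span ℂ W, ∀ v ∈ Submodule.span ℂ W,
      u * v ∈ Submodule.span ℂ W := by
    intro u hu
    induction hu using Submodule.span_induction with
    | mem u hu =>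
      intro v hv
      induction hv using Submodule.span_induction with
      | mem v hv =>
        obtain ⟨L, rfl⟩ := hu
        obtain ⟨L', rfl⟩ := hv
        refine Submodule.subset_span ⟨L ++ L', ?_⟩
        simp [List.prod_append]
      | zero => rw [mul_zero]; exact zero_mem _
      | add v w hv hw ihv ihw => rw [mul_add]; exact add_mem ihv ihw
      | smul r v hv ihv => rw [mul_smul_comm]; exact Submodule.smul_mem _ r ihv
    | zero => intro v _; rw [zero_mul]; exact zero_mem _
    | add u w hu hw ihu ihw => intro v hv; rw [add_mul]; exact add_mem (ihu v hv) (ihw v hv)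
    | smul r u hu ihu =>
      intro v hv
      rw [smul_mul_assoc]
      exact Submodule.smul_mem _ r (ihu v hv)
  have hspan_star : ∀ u ∈ Submodule.span ℂ W, star u ∈ Submodule.span ℂ W := by
    intro u hu
    induction hu using Submodule.span_induction with
    | mem u hu =>
      obtain ⟨L, rfl⟩ := hu
      rw [hstar_word]
      exact Submodule.subset_span ⟨L.reverse, rfl⟩
    | zero => rw [star_zero]; exact zero_mem _
    | add u w hu hw ihu ihw => rw [star_add]; exact add_mem ihu ihw
    | smul r u hu ihu => rw [star_smul]; exact Submodule.smul_mem _ _ ihu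
  have hadjoin_le : ∀ u ∈ StarAlgebra.adjoin ℂ (Set.range p),
      u ∈ Submodule.span ℂ W := by
    intro u hu
    induction hu using StarAlgebra.adjoin_induction with
    | mem u hu =>
      obtain ⟨y, rfl⟩ := hu
      refine Submodule.subset_span ⟨[y], ?_⟩
      simp
    | algebraMap r =>
      rw [Algebra.algebraMap_eq_smul_one]
      exact Submodule.smul_mem _ r (Submodule.subset_span ⟨[], by simp⟩)
    | add u w hu hw ihu ihw => exact add_mem ihu ihw
    | mul u w hu hw ihu ihw => exact hspan_mul u ihu w ihw
    | star u hu ihu => exact hspan_star u ihu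
  -- corner of the star-subalgebra lies in M
  have hcorner : ∀ u ∈ StarAlgebra.adjoin ℂ (Set.range p), p x * u * p x ∈ M := by
    intro u hu
    have hu' := hadjoin_le u hu
    clear hu
    induction hu' using Submodule.span_induction with
    | mem u hu =>
      obtain ⟨L, rfl⟩ := hu
      exact hword L
    | zero => rw [mul_zero, zero_mul]; exact zero_mem M
    | add u w hu hw ihu ihw => rw [mul_add, add_mul]; exact add_mem ihu ihw
    | smul r u hu ihu =>
      rw [mul_smul_comm, smul_mul_assoc]
      exact Subalgebra.smul_mem M ihu r
  -- pass to the closure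
  have hcont : Continuous (fun u : A => p x * u * p x) :=
    (continuous_const.mul continuous_id).mul continuous_const
  have ha' : a ∈ closure ((StarAlgebra.adjoin ℂ (Set.range p) : StarSubalgebra ℂ A) : Set A) := ha
  have hb' : b ∈ closure ((StarAlgebra.adjoin ℂ (Set.range p) : StarSubalgebra ℂ A) : Set A) := hb
  have haM : p x * a * p x ∈ closure (M : Set A) :=
    map_mem_closure (f := fun u => p x * u * p x) hcont ha' (fun u hu => hcorner u hu)
  have hbM : p x * b * p x ∈ closure (M : Set A) :=
    map_mem_closure (f := fun u => p x * u * p x) hcont hb' (fun u hu => hcorner u hu)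
  have hstep1 : ∀ v ∈ (M : Set A), ∀ u ∈ closure (M : Set A), u * v = v * u := by
    intro v hv u hu
    have hcl : closure (M : Set A) ⊆ {u | u * v = v * u} :=
      closure_minimal (fun w hw => hM_comm w hw v hv)
        (isClosed_eq (continuous_id.mul continuous_const)
          (continuous_const.mul continuous_id))
    exact hcl hu
  have hstep2 : ∀ u ∈ closure (M : Set A), ∀ v ∈ closure (M : Set A), u * v = v * u := by
    intro u hu v hv
    have hcl : closure (M : Set A) ⊆ {w | u * w = w * u} :=
      closure_minimal (fun w hw => (hstep1 w hw u hu))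
        (isClosed_eq (continuous_const.mul continuous_id)
          (continuous_id.mul continuous_const))
    exact hcl hv
  exact hstep2 _ haM _ hbM
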